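/- arXiv:1810.06275 — 4 statements merged into one kernel-verified Lean document; each statement's English description precedes it below -/
import Mathlib

section
/- Let X'_n : [0,1] → ℝ^d be the piecewise-constant trajectory X'_n(t) := n^{-1} S_{⌊nt⌋}. Then, almost surely, sup_{t ∈ [0,1]} ‖X'_n(t) − μ t‖ → 0 as n → ∞ (functional strong law of large numbers, step-trajectory version). -/
open MeasureTheory ProbabilityTheory Filter Set Topology

/-!
By the strong law of large numbers, almost surely `n⁻¹ S_n → μ`, i.e. `S_n = n μ + o(n)`.
The rest is deterministic: an `o(n)` error is bounded by `C + ε k` for every `ε > 0`, so its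
maximum over `k ≤ n` is still `o(n)`, and replacing `t` by `⌊n t⌋ / n` costs at most `‖μ‖ / n`.
-/

section Deterministic

variable {E : Type*} [SeminormedAddCommGroup E] [NormedSpace ℝ E]

theorem exists_norm_le_add_mul_of_tendsto_inv_smul {e : ℕ → E}
    (he : Tendsto (fun n : ℕ => (n : ℝ)⁻¹ • e n) atTop (𝓝 0)) {ε : ℝ} (hε : 0 < ε) :
    ∃ C, ∀ k : ℕ, ‖e k‖ ≤ C + ε * k := by
  obtain ⟨N, hN⟩ := eventually_atTop.1
    ((he.norm.eventually (gt_mem_nhds (by simpa using hε))).and (eventually_ge_atTop 1))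
  refine ⟨∑ k ∈ Finset.range N, ‖e k‖, fun k => ?_⟩
  have hC : 0 ≤ ∑ k ∈ Finset.range N, ‖e k‖ := by positivity
  rcases lt_or_ge k N with hk | hk
  · have := Finset.single_le_sum (f := fun k => ‖e k‖) (fun _ _ => norm_nonneg _)
      (Finset.mem_range.2 hk)
    nlinarith [(Nat.cast_nonneg k : (0 : ℝ) ≤ k)]
  · obtain ⟨hsmall, hk1⟩ := hN k hk
    have hkpos : (0 : ℝ) < k := by exact_mod_cast hk1
    rw [norm_smul, norm_inv, Real.norm_natCast, inv_mul_lt_iff₀ hkpos] at hsmall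
    linarith

theorem norm_inv_smul_floor_sub_le (s : ℕ → E) (m : E) {n : ℕ} (hn : 0 < n) {t : ℝ}
    (ht : 0 ≤ t) :
    ‖(n : ℝ)⁻¹ • s ⌊(n : ℝ) * t⌋₊ - t • m‖
      ≤ (‖s ⌊(n : ℝ) * t⌋₊ - (⌊(n : ℝ) * t⌋₊ : ℝ) • m‖ + ‖m‖) / n := by
  set k := ⌊(n : ℝ) * t⌋₊
  have hnpos : (0 : ℝ) < n := by exact_mod_cast hn
  have hk_le : (k : ℝ) ≤ n * t := Nat.floor_le (by positivity)
  have hk_gt : (n : ℝ) * t < k + 1 := Nat.lt_floor_add_one _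
  have hsplit : (n : ℝ)⁻¹ • s k - t • m
      = (n : ℝ)⁻¹ • (s k - (k : ℝ) • m) + (n : ℝ)⁻¹ • (((k : ℝ) - n * t) • m) := by
    have ht : t • m = (n : ℝ)⁻¹ • ((n * t) • m) := by
      rw [smul_smul, ← mul_assoc, inv_mul_cancel₀ hnpos.ne', one_mul]
    rw [ht, ← smul_sub, ← smul_add, sub_smul]
    abel_nf
  have hround : |(k : ℝ) - n * t| ≤ 1 := abs_le.2 ⟨by linarith, by linarith⟩
  calc ‖(n : ℝ)⁻¹ • s k - t • m‖
      ≤ (n : ℝ)⁻¹ * ‖s k - (k : ℝ) • m‖ + (n : ℝ)⁻¹ * (|(k : ℝ) - n * t| * ‖m‖) := by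
        rw [hsplit]
        refine (norm_add_le _ _).trans_eq ?_
        rw [norm_smul, norm_smul, norm_smul, norm_inv, Real.norm_natCast, Real.norm_eq_abs]
    _ ≤ (n : ℝ)⁻¹ * ‖s k - (k : ℝ) • m‖ + (n : ℝ)⁻¹ * (1 * ‖m‖) := by gcongr
    _ = (‖s k - (k : ℝ) • m‖ + ‖m‖) / n := by ring

theorem iSup_norm_inv_smul_floor_sub_le {s : ℕ → E} {m : E} {C ε : ℝ} (hε : 0 ≤ ε)
    (hC : ∀ k : ℕ, ‖s k - (k : ℝ) • m‖ ≤ C + ε * k) {n : ℕ} (hn : 0 < n) :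
    ⨆ t ∈ Icc (0 : ℝ) 1, ‖(n : ℝ)⁻¹ • s ⌊(n : ℝ) * t⌋₊ - t • m‖ ≤ (C + ‖m‖) / n + ε := by
  have hnpos : (0 : ℝ) < n := by exact_mod_cast hn
  have hbound : ∀ t ∈ Icc (0 : ℝ) 1,
      ‖(n : ℝ)⁻¹ • s ⌊(n : ℝ) * t⌋₊ - t • m‖ ≤ (C + ‖m‖) / n + ε := by
    rintro t ⟨ht0, ht1⟩
    have hkn : (⌊(n : ℝ) * t⌋₊ : ℝ) ≤ n :=
      (Nat.floor_le (by positivity)).trans (mul_le_of_le_one_right hnpos.le ht1)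
    calc ‖(n : ℝ)⁻¹ • s ⌊(n : ℝ) * t⌋₊ - t • m‖
        ≤ (‖s ⌊(n : ℝ) * t⌋₊ - (⌊(n : ℝ) * t⌋₊ : ℝ) • m‖ + ‖m‖) / n :=
          norm_inv_smul_floor_sub_le s m hn ht0
      _ ≤ (C + ε * n + ‖m‖) / n := by
          gcongr
          exact (hC _).trans (by gcongr)
      _ = (C + ‖m‖) / n + ε := by field_simp; ring
  have hnonneg : 0 ≤ (C + ‖m‖) / n + ε :=
    (norm_nonneg _).trans (hbound 0 ⟨le_rfl, zero_le_one⟩)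
  exact Real.iSup_le (fun t => Real.iSup_le (hbound t) hnonneg) hnonneg

theorem tendsto_iSup_norm_inv_smul_floor_sub {s : ℕ → E} {m : E}
    (hs : Tendsto (fun n : ℕ => (n : ℝ)⁻¹ • s n) atTop (𝓝 m)) :
    Tendsto (fun n : ℕ => ⨆ t ∈ Icc (0 : ℝ) 1, ‖(n : ℝ)⁻¹ • s ⌊(n : ℝ) * t⌋₊ - t • m‖)
      atTop (𝓝 0) := by
  have herr : Tendsto (fun n : ℕ => (n : ℝ)⁻¹ • (s n - (n : ℝ) • m)) atTop (𝓝 0) := by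
    refine (tendsto_sub_nhds_zero_iff.2 hs).congr' ?_
    filter_upwards [eventually_ne_atTop 0] with n hn
    rw [smul_sub, inv_smul_smul₀ (Nat.cast_ne_zero.2 hn)]
  rw [Metric.tendsto_nhds]
  intro ε hε
  obtain ⟨C, hC⟩ := exists_norm_le_add_mul_of_tendsto_inv_smul herr (half_pos hε)
  have hCm : Tendsto (fun n : ℕ => (C + ‖m‖) / n) atTop (𝓝 0) :=
    tendsto_const_div_atTop_nhds_zero_nat _
  filter_upwards [hCm.eventually (gt_mem_nhds (half_pos hε)), eventually_gt_atTop 0]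
    with n hCmn hn
  have hsup := iSup_norm_inv_smul_floor_sub_le (half_pos hε).le hC hn
  have hsup_nonneg := Real.iSup_nonneg fun t => Real.iSup_nonneg fun (_ : t ∈ Icc (0 : ℝ) 1) =>
    norm_nonneg ((n : ℝ)⁻¹ • s ⌊(n : ℝ) * t⌋₊ - t • m)
  rw [Real.dist_eq, sub_zero, abs_of_nonneg hsup_nonneg]
  linarith

end Deterministic

theorem functional_slln_step_general {d : ℕ}
    {Ω : Type*} [MeasureSpace Ω]
    (ξ : ℕ → Ω → EuclideanSpace ℝ (Fin d))
    (hindep : iIndepFun (fun i : ℕ => ξ (i + 1)) ℙ)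
    (hident : ∀ i : ℕ, IdentDistrib (ξ (i + 1)) (ξ 1) ℙ ℙ)
    (hint : Integrable (ξ 1) ℙ)
    (μv : EuclideanSpace ℝ (Fin d)) (hμ : ∫ ω, ξ 1 ω ∂ℙ = μv)
    (S : ℕ → Ω → EuclideanSpace ℝ (Fin d))
    (hS : ∀ n ω, S n ω = ∑ i ∈ Finset.Icc 1 n, ξ i ω) :
    ∀ᵐ ω ∂ℙ, Tendsto
      (fun n : ℕ => ⨆ t ∈ Icc (0:ℝ) 1, ‖(n : ℝ)⁻¹ • S ⌊(n : ℝ) * t⌋₊ ω - t • μv‖)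
      atTop (nhds 0) := by
  have hslln := strong_law_ae (fun i => ξ (i + 1)) hint
    (fun i j hij => hindep.indepFun hij) hident
  filter_upwards [hslln] with ω hω
  have hsum : ∀ n, S n ω = ∑ i ∈ Finset.range n, ξ (i + 1) ω := fun n => by
    rw [hS, Finset.range_eq_Ico, Finset.sum_Ico_add' (fun i => ξ i ω), zero_add,
      Finset.Ico_add_one_right_eq_Icc]
  refine tendsto_iSup_norm_inv_smul_floor_sub (s := fun n => S n ω) ?_
  simpa only [hsum, ← hμ] using hω

/-- **Functional strong law of large numbers, step-trajectory version.**
For an i.i.d. random walk `S` in `ℝ^d` with integrable increments of mean `μv`,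
the piecewise-constant trajectories `X'_n(t) = n⁻¹ S_{⌊nt⌋}` converge almost surely,
uniformly on `[0,1]`, to `t ↦ t • μv`. -/
theorem functional_slln_step {d : ℕ} (hd : 1 ≤ d)
    {Ω : Type*} [MeasureSpace Ω] [IsProbabilityMeasure (ℙ : Measure Ω)]
    (ξ : ℕ → Ω → EuclideanSpace ℝ (Fin d))
    (hmeas : ∀ i, Measurable (ξ i))
    (hindep : iIndepFun (fun i : ℕ => ξ (i + 1)) ℙ)
    (hident : ∀ i : ℕ, IdentDistrib (ξ (i + 1)) (ξ 1) ℙ ℙ)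
    (hint : Integrable (ξ 1) ℙ)
    (μv : EuclideanSpace ℝ (Fin d)) (hμ : ∫ ω, ξ 1 ω ∂ℙ = μv)
    (S : ℕ → Ω → EuclideanSpace ℝ (Fin d))
    (hS : ∀ n ω, S n ω = ∑ i ∈ Finset.Icc 1 n, ξ i ω) :
    ∀ᵐ ω ∂ℙ, Tendsto
      (fun n : ℕ => ⨆ t ∈ Icc (0:ℝ) 1, ‖(n : ℝ)⁻¹ • S ⌊(n : ℝ) * t⌋₊ ω - t • μv‖)
      atTop (nhds 0) :=
  functional_slln_step_general ξ hindep hident hint μv hμ S hS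
end

section
/- Almost surely, the Hausdorff distance ρ_H( n^{-1}{S₀, S₁, …, S_n} , [0, μ] ) → 0 as n → ∞, where n^{-1}{S₀, …, S_n} = { S_k / n : 0 ≤ k ≤ n } and [0, μ] = { t μ : t ∈ [0,1] } is the line segment from the origin to μ. -/
/-!
By the strong law of large numbers `S_n / n → μ` almost surely, and the rest is deterministic.
If `a_n / n → μ`, then `max_{k ≤ n} ‖a_k - k μ‖ = o(n)`, so every point `a_k / n` lies within
`o(1)` of the point `(k / n) μ` of the segment, while every `t μ` on the segment lies within
`‖μ‖ / n` of some `(k / n) μ` with `k ≤ n`.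
-/

open MeasureTheory ProbabilityTheory Filter Set Metric

lemma Finset.sum_Icc_one_eq_sum_range {M : Type*} [AddCommMonoid M] (f : ℕ → M) (n : ℕ) :
    ∑ i ∈ Finset.Icc 1 n, f i = ∑ i ∈ Finset.range n, f (i + 1) := by
  rw [← Finset.Ico_add_one_right_eq_Icc, Finset.sum_Ico_eq_sum_range]
  simp only [add_tsub_cancel_right, add_comm 1]

lemma exists_nat_le_abs_sub_div_le {t : ℝ} (ht₀ : 0 ≤ t) (ht₁ : t ≤ 1) {n : ℕ} (hn : 0 < n) :
    ∃ k ≤ n, |t - k / n| ≤ (n : ℝ)⁻¹ := by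
  have hn' : (0 : ℝ) < n := Nat.cast_pos.mpr hn
  refine ⟨⌊t * n⌋₊, ?_, ?_⟩
  · exact Nat.floor_le_of_le (by nlinarith)
  · have hlo : (⌊t * n⌋₊ : ℝ) ≤ t * n := Nat.floor_le (by positivity)
    have hhi : t * n < ⌊t * n⌋₊ + 1 := Nat.lt_floor_add_one _
    have hdiff : t - ⌊t * n⌋₊ / n = (t * n - ⌊t * n⌋₊) * (n : ℝ)⁻¹ := by field_simp
    rw [hdiff, abs_le]
    constructor <;> nlinarith [inv_pos.mpr hn', mul_inv_cancel₀ hn'.ne']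

section

variable {E : Type*} [NormedAddCommGroup E] [NormedSpace ℝ E]

lemma eventually_forall_le_norm_le_mul {b : ℕ → E}
    (hb : Tendsto (fun n : ℕ => (n : ℝ)⁻¹ • b n) atTop (nhds 0))
    {ε : ℝ} (hε : 0 < ε) : ∀ᶠ n : ℕ in atTop, ∀ k ≤ n, ‖b k‖ ≤ ε * n := by
  obtain ⟨K, hK⟩ := Metric.tendsto_atTop.mp hb ε hε
  have hlarge : ∀ k ≥ max K 1, ‖b k‖ ≤ ε * k := by
    intro k hk
    have hk' : (0 : ℝ) < k := by exact_mod_cast (le_max_right K 1).trans hk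
    have := hK k ((le_max_left K 1).trans hk)
    rw [dist_zero_right, norm_smul, norm_inv, Real.norm_natCast, inv_mul_lt_iff₀ hk'] at this
    linarith
  set M := ∑ k ∈ Finset.range (max K 1), ‖b k‖
  have hsmall : ∀ k < max K 1, ‖b k‖ ≤ M := fun k hk =>
    Finset.single_le_sum (f := fun k => ‖b k‖) (fun _ _ => norm_nonneg _) (Finset.mem_range.mpr hk)
  filter_upwards [(tendsto_natCast_atTop_atTop (R := ℝ)).eventually_ge_atTop (M / ε)]
    with n hn k hkn
  rcases lt_or_ge k (max K 1) with hk | hk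
  · calc ‖b k‖ ≤ M := hsmall k hk
      _ ≤ ε * n := by rwa [div_le_iff₀' hε] at hn
  · calc ‖b k‖ ≤ ε * k := hlarge k hk
      _ ≤ ε * n := by gcongr

lemma dist_inv_smul_div_smul (n k : ℕ) (x μ : E) :
    dist ((n : ℝ)⁻¹ • x) (((k : ℝ) / n) • μ) = (n : ℝ)⁻¹ * ‖x - (k : ℝ) • μ‖ := by
  rw [dist_eq_norm, div_eq_inv_mul, ← smul_smul, ← smul_sub, norm_smul, norm_inv,
    Real.norm_natCast]

lemma hausdorffDist_image_segment_le {a : ℕ → E} {μ : E} {n : ℕ} (hn : 0 < n) {r : ℝ}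
    (ha : ∀ k ≤ n, ‖a k - (k : ℝ) • μ‖ ≤ r * n) :
    hausdorffDist ((fun k : ℕ => (n : ℝ)⁻¹ • a k) '' Iic n) (segment ℝ 0 μ) ≤ r + ‖μ‖ / n := by
  have hn' : (0 : ℝ) < n := Nat.cast_pos.mpr hn
  have hclose : ∀ k ≤ n, dist ((n : ℝ)⁻¹ • a k) (((k : ℝ) / n) • μ) ≤ r := fun k hk => by
    rw [dist_inv_smul_div_smul, inv_mul_le_iff₀ hn', mul_comm]
    exact ha k hk
  have hr : 0 ≤ r := dist_nonneg.trans (hclose 0 n.zero_le)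
  apply hausdorffDist_le_of_mem_dist (by positivity)
  · rintro _ ⟨k, hk, rfl⟩
    have hkn : (k : ℝ) / n ≤ 1 := div_le_one_of_le₀ (Nat.cast_le.mpr hk) hn'.le
    refine ⟨((k : ℝ) / n) • μ, ?_, (hclose k hk).trans (le_add_of_nonneg_right (by positivity))⟩
    rw [segment_eq_image']
    exact ⟨(k : ℝ) / n, ⟨by positivity, hkn⟩, by simp⟩
  · rw [segment_eq_image']
    rintro _ ⟨t, ⟨ht₀, ht₁⟩, rfl⟩
    obtain ⟨k, hk, htk⟩ := exists_nat_le_abs_sub_div_le ht₀ ht₁ hn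
    refine ⟨(n : ℝ)⁻¹ • a k, ⟨k, hk, rfl⟩, ?_⟩
    calc dist (0 + t • (μ - 0)) ((n : ℝ)⁻¹ • a k)
        ≤ dist (t • μ) (((k : ℝ) / n) • μ) + dist (((k : ℝ) / n) • μ) ((n : ℝ)⁻¹ • a k) := by
          simpa using dist_triangle _ _ _
      _ ≤ ‖μ‖ / n + r := by
          gcongr
          · rw [dist_eq_norm, ← sub_smul, norm_smul, Real.norm_eq_abs, div_eq_mul_inv ‖μ‖,
              mul_comm ‖μ‖]
            exact mul_le_mul_of_nonneg_right htk (norm_nonneg μ)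
          · rw [dist_comm]
            exact hclose k hk
      _ = r + ‖μ‖ / n := add_comm _ _

theorem tendsto_hausdorffDist_image_segment {a : ℕ → E} {μ : E}
    (ha : Tendsto (fun n : ℕ => (n : ℝ)⁻¹ • a n) atTop (nhds μ)) :
    Tendsto (fun n : ℕ => hausdorffDist ((fun k : ℕ => (n : ℝ)⁻¹ • a k) '' Iic n)
      (segment ℝ 0 μ)) atTop (nhds 0) := by
  have hdev : Tendsto (fun n : ℕ => (n : ℝ)⁻¹ • (a n - (n : ℝ) • μ)) atTop (nhds 0) := by
    refine sub_self μ ▸ (ha.sub_const μ).congr' <| (eventually_gt_atTop 0).mono fun n hn => ?_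
    simp only [smul_sub, smul_smul, inv_mul_cancel₀ (Nat.cast_ne_zero (R := ℝ).mpr hn.ne'),
      one_smul]
  have hμn : Tendsto (fun n : ℕ => ‖μ‖ / n) atTop (nhds 0) :=
    tendsto_const_div_atTop_nhds_zero_nat ‖μ‖
  rw [Metric.tendsto_nhds]
  intro ε hε
  filter_upwards [eventually_forall_le_norm_le_mul hdev (half_pos hε),
    hμn.eventually (gt_mem_nhds (half_pos hε)), eventually_gt_atTop 0] with n hsmall hμε hn
  rw [Real.dist_eq, sub_zero, abs_of_nonneg hausdorffDist_nonneg]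
  linarith [hausdorffDist_image_segment_le hn hsmall]

end

theorem rw_points_hausdorff_slln_general {d : ℕ}
    {Ω : Type*} [MeasureSpace Ω]
    (ξ : ℕ → Ω → EuclideanSpace ℝ (Fin d))
    (hindep : iIndepFun (fun i : ℕ => ξ (i + 1)) ℙ)
    (hident : ∀ i : ℕ, IdentDistrib (ξ (i + 1)) (ξ 1) ℙ ℙ)
    (hint : Integrable (ξ 1) ℙ)
    (μv : EuclideanSpace ℝ (Fin d)) (hμ : ∫ ω, ξ 1 ω ∂ℙ = μv)
    (S : ℕ → Ω → EuclideanSpace ℝ (Fin d))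
    (hS : ∀ n ω, S n ω = ∑ i ∈ Finset.Icc 1 n, ξ i ω) :
    ∀ᵐ ω ∂ℙ, Tendsto
      (fun n : ℕ => hausdorffDist
        ((fun k : ℕ => (n : ℝ)⁻¹ • S k ω) '' Iic n)
        (segment ℝ (0 : EuclideanSpace ℝ (Fin d)) μv))
      atTop (nhds 0) := by
  have hslln := strong_law_ae (fun i : ℕ => ξ (i + 1)) hint
    (fun _ _ hij => hindep.indepFun hij) hident
  filter_upwards [hslln] with ω hω
  refine tendsto_hausdorffDist_image_segment ?_
  simpa only [hS, Finset.sum_Icc_one_eq_sum_range, hμ] using hω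

/-- **Set law of large numbers for random walk points.** Almost surely, the rescaled
point set `n⁻¹{S₀, S₁, …, S_n}` converges in Hausdorff distance to the segment
`[0, μ] = {tμ : t ∈ [0,1]}`. -/
theorem rw_points_hausdorff_slln {d : ℕ} (hd : 1 ≤ d)
    {Ω : Type*} [MeasureSpace Ω] [IsProbabilityMeasure (ℙ : Measure Ω)]
    (ξ : ℕ → Ω → EuclideanSpace ℝ (Fin d))
    (hmeas : ∀ i, Measurable (ξ i))
    (hindep : iIndepFun (fun i : ℕ => ξ (i + 1)) ℙ)
    (hident : ∀ i : ℕ, IdentDistrib (ξ (i + 1)) (ξ 1) ℙ ℙ)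
    (hint : Integrable (ξ 1) ℙ)
    (μv : EuclideanSpace ℝ (Fin d)) (hμ : ∫ ω, ξ 1 ω ∂ℙ = μv)
    (S : ℕ → Ω → EuclideanSpace ℝ (Fin d))
    (hS : ∀ n ω, S n ω = ∑ i ∈ Finset.Icc 1 n, ξ i ω) :
    ∀ᵐ ω ∂ℙ, Tendsto
      (fun n : ℕ => hausdorffDist
        ((fun k : ℕ => (n : ℝ)⁻¹ • S k ω) '' Iic n)
        (segment ℝ (0 : EuclideanSpace ℝ (Fin d)) μv))
      atTop (nhds 0) :=
  rw_points_hausdorff_slln_general ξ hindep hident hint μv hμ S hS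
end

section
/- Let D_n := diam {S₀, S₁, …, S_n} = max_{0 ≤ i, j ≤ n} ‖S_i − S_j‖ be the diameter of the first n steps of the walk. Then, almost surely, n^{-1} D_n → ‖μ‖ as n → ∞. -/
/-!
By the strong law of large numbers, almost surely `S_n = n • μ + r_n` with `r_n = o(n)`, and
then also `max_{k ≤ n} ‖r_k‖ = o(n)`. Every distance `‖S_i - S_j‖` with `i, j ≤ n` is within
`2 max_{k ≤ n} ‖r_k‖` of `|i - j| ‖μ‖ ≤ n ‖μ‖`, with equality `n ‖μ‖` for `(i, j) = (n, 0)`, so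
`D_n = n ‖μ‖ + o(n)`.
-/

open MeasureTheory ProbabilityTheory Filter Set Metric Asymptotics Topology

theorem Asymptotics.IsLittleO.eventually_forall_le_norm_le {E : Type*} [Norm E] {r : ℕ → E}
    (h : r =o[atTop] (fun n : ℕ => (n : ℝ))) {ε : ℝ} (hε : 0 < ε) :
    ∀ᶠ n in atTop, ∀ k ≤ n, ‖r k‖ ≤ ε * n := by
  obtain ⟨N, hN⟩ := eventually_atTop.1 (isLittleO_iff.1 h hε)
  have hinitial : ∀ᶠ n : ℕ in atTop, ∀ k ∈ Iio N, ‖r k‖ ≤ ε * n :=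
    (finite_Iio N).eventually_all.2 fun k _ =>
      (tendsto_natCast_atTop_atTop.const_mul_atTop hε).eventually_ge_atTop _
  filter_upwards [hinitial] with n hn k hk
  rcases lt_or_ge k N with hkN | hkN
  · exact hn k hkN
  · calc ‖r k‖ ≤ ε * ‖(k : ℝ)‖ := hN k hkN
      _ ≤ ε * n := by rw [Real.norm_natCast]; gcongr

section Deterministic

variable {E : Type*} [NormedAddCommGroup E] [NormedSpace ℝ E]

theorem abs_diam_image_Iic_sub_le {f : ℕ → E} {v : E} {n : ℕ} {δ : ℝ}
    (h : ∀ k ≤ n, ‖f k - (k : ℝ) • v‖ ≤ δ) :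
    |diam (f '' Iic n) - n * ‖v‖| ≤ 2 * δ := by
  have hδ : 0 ≤ δ := (norm_nonneg _).trans (h 0 n.zero_le)
  have hdecomp : ∀ i j : ℕ,
      f i - f j = ((i : ℝ) - j) • v + ((f i - (i : ℝ) • v) - (f j - (j : ℝ) • v)) := by
    intro i j
    rw [sub_smul]
    abel
  have hupper : diam (f '' Iic n) ≤ n * ‖v‖ + 2 * δ := by
    refine diam_le_of_forall_dist_le (by positivity) ?_
    rintro _ ⟨i, hi, rfl⟩ _ ⟨j, hj, rfl⟩
    have hij : |(i : ℝ) - j| ≤ n :=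
      abs_sub_le_of_nonneg_of_le i.cast_nonneg (Nat.cast_le.2 hi) j.cast_nonneg (Nat.cast_le.2 hj)
    calc dist (f i) (f j)
        ≤ ‖((i : ℝ) - j) • v‖ + (‖f i - (i : ℝ) • v‖ + ‖f j - (j : ℝ) • v‖) := by
          rw [dist_eq_norm, hdecomp]
          exact (norm_add_le _ _).trans (by gcongr; exact norm_sub_le _ _)
      _ ≤ n * ‖v‖ + 2 * δ := by
          rw [norm_smul, Real.norm_eq_abs]
          linarith [h i hi, h j hj, mul_le_mul_of_nonneg_right hij (norm_nonneg v)]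
  have hlower : n * ‖v‖ - 2 * δ ≤ diam (f '' Iic n) := by
    have hdist := dist_le_diam_of_mem ((finite_Iic n).image f).isBounded
      (mem_image_of_mem f (mem_Iic.2 le_rfl)) (mem_image_of_mem f (mem_Iic.2 n.zero_le))
    have hnv : (n : ℝ) • v = (f n - f 0) - ((f n - (n : ℝ) • v) - (f 0 - ((0 : ℕ) : ℝ) • v)) := by
      rw [hdecomp, Nat.cast_zero, sub_zero, add_sub_cancel_right]
    have hnorm : ‖(n : ℝ) • v‖ ≤
        dist (f n) (f 0) + (‖f n - (n : ℝ) • v‖ + ‖f 0 - ((0 : ℕ) : ℝ) • v‖) := by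
      conv_lhs => rw [hnv]
      rw [dist_eq_norm]
      exact (norm_sub_le _ _).trans (by gcongr; exact norm_sub_le _ _)
    rw [norm_smul, Real.norm_natCast] at hnorm
    linarith [h n le_rfl, h 0 n.zero_le]
  rw [abs_sub_le_iff]
  constructor <;> linarith

theorem isLittleO_sub_smul_of_tendsto_inv_smul {f : ℕ → E} {v : E}
    (h : Tendsto (fun n : ℕ => (n : ℝ)⁻¹ • f n) atTop (𝓝 v)) :
    (fun n : ℕ => f n - (n : ℝ) • v) =o[atTop] (fun n : ℕ => (n : ℝ)) := by
  have hdev : (fun n : ℕ => (n : ℝ)⁻¹ • f n - v) =o[atTop] (fun _ => (1 : ℝ)) :=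
    (isLittleO_one_iff ℝ).2 (by simpa using h.sub_const v)
  refine ((isBigO_refl (fun n : ℕ => (n : ℝ)) atTop).smul_isLittleO hdev).congr' ?_
    (Eventually.of_forall fun n => by simp)
  filter_upwards [eventually_ne_atTop 0] with n hn
  rw [smul_sub, smul_inv_smul₀ (Nat.cast_ne_zero.2 hn)]

theorem tendsto_inv_mul_diam_image_Iic {f : ℕ → E} {v : E}
    (h : Tendsto (fun n : ℕ => (n : ℝ)⁻¹ • f n) atTop (𝓝 v)) :
    Tendsto (fun n : ℕ => (n : ℝ)⁻¹ * diam (f '' Iic n)) atTop (𝓝 ‖v‖) := by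
  have hdiam : (fun n : ℕ => diam (f '' Iic n) - n * ‖v‖) =o[atTop] (fun n : ℕ => (n : ℝ)) := by
    refine isLittleO_iff.2 fun ε hε => ?_
    filter_upwards [(isLittleO_sub_smul_of_tendsto_inv_smul h).eventually_forall_le_norm_le
      (half_pos hε)] with n hn
    rw [Real.norm_eq_abs, Real.norm_natCast]
    linarith [abs_diam_image_Iic_sub_le hn]
  have hlim := hdiam.tendsto_div_nhds_zero.add_const ‖v‖
  rw [zero_add] at hlim
  refine hlim.congr' ?_
  filter_upwards [eventually_ne_atTop 0] with n hn
  field_simp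
  ring

end Deterministic

theorem rw_diameter_slln_general {d : ℕ}
    {Ω : Type*} [MeasureSpace Ω]
    (ξ : ℕ → Ω → EuclideanSpace ℝ (Fin d))
    (hindep : iIndepFun (fun i : ℕ => ξ (i + 1)) ℙ)
    (hident : ∀ i : ℕ, IdentDistrib (ξ (i + 1)) (ξ 1) ℙ ℙ)
    (hint : Integrable (ξ 1) ℙ)
    (μv : EuclideanSpace ℝ (Fin d)) (hμ : ∫ ω, ξ 1 ω ∂ℙ = μv)
    (S : ℕ → Ω → EuclideanSpace ℝ (Fin d))
    (hS : ∀ n ω, S n ω = ∑ i ∈ Finset.Icc 1 n, ξ i ω) :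
    ∀ᵐ ω ∂ℙ, Tendsto
      (fun n : ℕ => (n : ℝ)⁻¹ * diam ((fun k : ℕ => S k ω) '' Iic n))
      atTop (nhds ‖μv‖) := by
  have hslln := strong_law_ae (μ := (ℙ : Measure Ω)) (fun i => ξ (i + 1)) hint
    (fun i j hij => hindep.indepFun hij) (fun i => (hident i).trans (hident 0).symm)
  have hSsum : ∀ n ω, S n ω = ∑ i ∈ Finset.range n, ξ (i + 1) ω := by
    intro n ω
    rw [hS, Finset.range_eq_Ico, Finset.sum_Ico_add' (fun i => ξ i ω), zero_add,
      Finset.Ico_add_one_right_eq_Icc]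
  filter_upwards [hslln] with ω hω
  refine tendsto_inv_mul_diam_image_Iic ?_
  simpa only [hSsum, zero_add, hμ] using hω

/-- **LLN for the diameter of the random walk.** With `D_n = diam{S₀, …, S_n}`, almost
surely `n⁻¹ D_n → ‖μ‖`. -/
theorem rw_diameter_slln {d : ℕ} (hd : 1 ≤ d)
    {Ω : Type*} [MeasureSpace Ω] [IsProbabilityMeasure (ℙ : Measure Ω)]
    (ξ : ℕ → Ω → EuclideanSpace ℝ (Fin d))
    (hmeas : ∀ i, Measurable (ξ i))
    (hindep : iIndepFun (fun i : ℕ => ξ (i + 1)) ℙ)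
    (hident : ∀ i : ℕ, IdentDistrib (ξ (i + 1)) (ξ 1) ℙ ℙ)
    (hint : Integrable (ξ 1) ℙ)
    (μv : EuclideanSpace ℝ (Fin d)) (hμ : ∫ ω, ξ 1 ω ∂ℙ = μv)
    (S : ℕ → Ω → EuclideanSpace ℝ (Fin d))
    (hS : ∀ n ω, S n ω = ∑ i ∈ Finset.Icc 1 n, ξ i ω) :
    ∀ᵐ ω ∂ℙ, Tendsto
      (fun n : ℕ => (n : ℝ)⁻¹ * diam ((fun k : ℕ => S k ω) '' Iic n))
      atTop (nhds ‖μv‖) :=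
  rw_diameter_slln_general ξ hindep hident hint μv hμ S hS
end

section
/- For n ≥ 1 define Δ_n : [0,1] → ℝ^d by Δ_n(0) := 0 and Δ_n(t) := (1/t) ∫₀^t S_{⌊ns⌋} ds − G_{⌊nt⌋} for t ∈ (0,1]. Then for every α > 0, almost surely n^{−α} · sup_{t ∈ [0,1]} ‖Δ_n(t)‖ → 0 as n → ∞. -/
/-!
By the strong law of large numbers applied to `‖ξ i‖`, almost surely `‖S k‖ ≤ C k` for some `C`
and all `k`; the rest is deterministic. Put `u = n t` and `m = ⌊u⌋`. The step function
`s ↦ S ⌊n s⌋` integrates to `n⁻¹ (∑_{i<m} S i + (u - m) S m)`, and `∑_{i<m} S i = m G m - S m`, so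
`Δ n t = ((m - u)/u) G m + ((u - m - 1)/u) S m`. Since `‖G m‖, ‖S m‖ ≤ C m` and `m ≤ u < m + 1`,
this gives `‖Δ n t‖ ≤ C m / u ≤ C` uniformly in `n ≥ 1` and `t ∈ [0, 1]`, which the factor
`n^{-α}` sends to `0`.
-/

open MeasureTheory ProbabilityTheory Filter Set

section StepFunction

variable {E : Type*} (F : ℕ → E)

lemma eqOn_comp_natFloor_Ioo {k : ℕ} {x : ℝ} (hx : x ≤ k + 1) :
    EqOn (fun u : ℝ => F ⌊u⌋₊) (fun _ => F k) (Ioo k x) := fun u hu =>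
  congrArg F (Nat.floor_eq_on_Ico k u ⟨hu.1.le, hu.2.trans_le hx⟩)

variable [NormedAddCommGroup E]

lemma intervalIntegrable_comp_natFloor_of_le {k : ℕ} {x : ℝ} (hkx : k ≤ x) (hx : x ≤ k + 1) :
    IntervalIntegrable (fun u : ℝ => F ⌊u⌋₊) volume k x :=
  intervalIntegrable_const.congr_uIoo (uIoo_of_le hkx ▸ (eqOn_comp_natFloor_Ioo F hx).symm)

variable [NormedSpace ℝ E]

noncomputable def centreOfMass (m : ℕ) : E := (m : ℝ)⁻¹ • ∑ i ∈ Finset.Icc 1 m, F i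

lemma sum_range_eq_smul_centreOfMass_sub (hF0 : F 0 = 0) (m : ℕ) :
    ∑ i ∈ Finset.range m, F i = (m : ℝ) • centreOfMass F m - F m := by
  rcases Nat.eq_zero_or_pos m with rfl | hm
  · simp [hF0]
  rw [eq_sub_iff_add_eq, ← Finset.sum_range_succ, Finset.range_eq_Ico,
    Finset.sum_eq_sum_Ico_succ_bot (by omega), Finset.Ico_add_one_right_eq_Icc, hF0, zero_add,
    centreOfMass, smul_inv_smul₀ (by positivity)]

lemma norm_centreOfMass_le {C : ℝ} (hF : ∀ k : ℕ, ‖F k‖ ≤ C * k) (m : ℕ) :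
    ‖centreOfMass F m‖ ≤ C * m := by
  have hC : 0 ≤ C := by simpa using (norm_nonneg _).trans (hF 1)
  have hsum : ‖∑ i ∈ Finset.Icc 1 m, F i‖ ≤ m * (C * m) := by
    calc ‖∑ i ∈ Finset.Icc 1 m, F i‖ ≤ ∑ i ∈ Finset.Icc 1 m, ‖F i‖ := norm_sum_le _ _
      _ ≤ (Finset.Icc 1 m).card • (C * m) := Finset.sum_le_card_nsmul _ _ _ fun i hi =>
          (hF i).trans (by gcongr; exact_mod_cast (Finset.mem_Icc.mp hi).2)
      _ = m * (C * m) := by simp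
  rcases Nat.eq_zero_or_pos m with rfl | hm
  · simp [centreOfMass]
  rw [centreOfMass, norm_smul, norm_inv, Real.norm_natCast, inv_mul_le_iff₀ (by positivity)]
  exact hsum

variable [CompleteSpace E]

lemma integral_comp_natFloor_of_le {k : ℕ} {x : ℝ} (hkx : k ≤ x) (hx : x ≤ k + 1) :
    ∫ u in (k : ℝ)..x, F ⌊u⌋₊ = (x - k) • F k := by
  rw [intervalIntegral.integral_congr_Ioo_of_le hkx (eqOn_comp_natFloor_Ioo F hx),
    intervalIntegral.integral_const]

lemma integral_comp_natFloor {x : ℝ} (hx : 0 ≤ x) :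
    ∫ u in (0 : ℝ)..x, F ⌊u⌋₊
      = ∑ i ∈ Finset.range ⌊x⌋₊, F i + (x - ⌊x⌋₊) • F ⌊x⌋₊ := by
  set m := ⌊x⌋₊
  have hmx : (m : ℝ) ≤ x := Nat.floor_le hx
  have hxm : x ≤ m + 1 := (Nat.lt_floor_add_one x).le
  have hunit (k : ℕ) : IntervalIntegrable (fun u : ℝ => F ⌊u⌋₊) volume k (k + 1 : ℕ) := by
    push_cast
    exact intervalIntegrable_comp_natFloor_of_le F (by linarith) le_rfl
  have hsum := intervalIntegral.sum_integral_adjacent_intervals (n := m) fun k _ => hunit k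
  have hinit := IntervalIntegrable.trans_iterate (n := m) fun k _ => hunit k
  push_cast at hsum hinit
  rw [← intervalIntegral.integral_add_adjacent_intervals hinit
    (intervalIntegrable_comp_natFloor_of_le F hmx hxm), ← hsum,
    integral_comp_natFloor_of_le F hmx hxm]
  congr 1
  refine Finset.sum_congr rfl fun k _ => ?_
  rw [integral_comp_natFloor_of_le F (by linarith) le_rfl]
  simp

lemma norm_inv_smul_integral_comp_natFloor_sub_centreOfMass_le (hF0 : F 0 = 0) {C : ℝ}
    (hF : ∀ k : ℕ, ‖F k‖ ≤ C * k) {u : ℝ} (hu : 0 ≤ u) :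
    ‖u⁻¹ • (∫ v in (0 : ℝ)..u, F ⌊v⌋₊) - centreOfMass F ⌊u⌋₊‖ ≤ C := by
  have hC : 0 ≤ C := by simpa using (norm_nonneg _).trans (hF 1)
  set m := ⌊u⌋₊
  rcases Nat.eq_zero_or_pos m with hm0 | hm
  · rw [integral_comp_natFloor F hu]
    simp [m, hm0, hF0, centreOfMass, hC]
  have hmu : (m : ℝ) ≤ u := Nat.floor_le hu
  have hum : u < m + 1 := Nat.lt_floor_add_one u
  have hm1 : (1 : ℝ) ≤ m := by exact_mod_cast hm
  have hu0 : 0 < u := by linarith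
  have hdecomp : u⁻¹ • (∫ v in (0 : ℝ)..u, F ⌊v⌋₊) - centreOfMass F m
      = ((m - u) / u) • centreOfMass F m + ((u - m - 1) / u) • F m := by
    rw [integral_comp_natFloor F hu, sum_range_eq_smul_centreOfMass_sub F hF0]
    match_scalars <;> field_simp <;> ring
  rw [hdecomp]
  calc _ ≤ ‖((m - u) / u) • centreOfMass F m‖ + ‖((u - m - 1) / u) • F m‖ := norm_add_le _ _
    _ ≤ ((u - m) / u) * (C * m) + ((m + 1 - u) / u) * (C * m) := by
        rw [norm_smul, norm_smul, Real.norm_eq_abs, Real.norm_eq_abs, abs_div, abs_div,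
          abs_of_pos hu0, abs_of_nonpos (by linarith), abs_of_nonpos (by linarith)]
        gcongr <;> linarith [norm_centreOfMass_le F hF m, hF m]
    _ = C * (m / u) := by field_simp; ring
    _ ≤ C := mul_le_of_le_one_right hC ((div_le_one hu0).2 hmu)

lemma norm_inv_smul_integral_comp_natFloor_mul_sub_centreOfMass_le (hF0 : F 0 = 0) {C : ℝ}
    (hF : ∀ k : ℕ, ‖F k‖ ≤ C * k) {n : ℕ} (hn : n ≠ 0) {t : ℝ} (ht : 0 ≤ t) :
    ‖t⁻¹ • (∫ s in (0 : ℝ)..t, F ⌊(n : ℝ) * s⌋₊) - centreOfMass F ⌊(n : ℝ) * t⌋₊‖ ≤ C := by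
  rw [intervalIntegral.integral_comp_mul_left (fun v => F ⌊v⌋₊) (Nat.cast_ne_zero.2 hn),
    mul_zero, smul_smul, ← mul_inv, mul_comm t]
  exact norm_inv_smul_integral_comp_natFloor_sub_centreOfMass_le F hF0 hF (by positivity)

end StepFunction

lemma ae_exists_norm_sum_range_le_mul {Ω E : Type*} [MeasurableSpace Ω] {μ : Measure Ω}
    [NormedAddCommGroup E] [MeasurableSpace E] [OpensMeasurableSpace E] {X : ℕ → Ω → E}
    (hint : Integrable (X 0) μ) (hindep : Pairwise fun i j => IndepFun (X i) (X j) μ)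
    (hident : ∀ i, IdentDistrib (X i) (X 0) μ μ) :
    ∀ᵐ ω ∂μ, ∃ C, ∀ k : ℕ, ‖∑ i ∈ Finset.range k, X i ω‖ ≤ C * k := by
  have hslln := strong_law_ae_real (fun i ω => ‖X i ω‖) hint.norm
    (fun i j hij => (hindep hij).comp measurable_norm measurable_norm)
    (fun i => (hident i).comp measurable_norm)
  filter_upwards [hslln] with ω hω
  obtain ⟨C, hC⟩ := hω.bddAbove_range
  refine ⟨C, fun k => ?_⟩
  rcases k.eq_zero_or_pos with rfl | hk
  · simp
  calc ‖∑ i ∈ Finset.range k, X i ω‖ ≤ ∑ i ∈ Finset.range k, ‖X i ω‖ := norm_sum_le _ _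
    _ ≤ C * k := (div_le_iff₀ (by positivity)).1 (hC ⟨k, rfl⟩)

lemma tendsto_natCast_rpow_neg_mul_of_le {α : ℝ} (hα : 0 < α) {a : ℕ → ℝ} {C : ℝ}
    (ha : ∀ n, 0 ≤ a n) (haC : ∀ᶠ n in atTop, a n ≤ C) :
    Tendsto (fun n : ℕ => (n : ℝ) ^ (-α) * a n) atTop (nhds 0) := by
  refine squeeze_zero' (.of_forall fun n => by have := ha n; positivity)
    (haC.mono fun n hn => mul_le_mul_of_nonneg_left hn (by positivity)) ?_
  simpa using ((tendsto_rpow_neg_atTop hα).comp tendsto_natCast_atTop_atTop).mul_const C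

-- Since `(0 : ℝ)⁻¹ = 0`, `hΔ` also gives `Δ n ω 0 = 0`.
theorem centre_of_mass_approx_general {d : ℕ}
    {Ω : Type*} [MeasureSpace Ω]
    (ξ : ℕ → Ω → EuclideanSpace ℝ (Fin d))
    (hindep : iIndepFun (fun i : ℕ => ξ (i + 1)) ℙ)
    (hident : ∀ i : ℕ, IdentDistrib (ξ (i + 1)) (ξ 1) ℙ ℙ)
    (hint : Integrable (ξ 1) ℙ)
    (S : ℕ → Ω → EuclideanSpace ℝ (Fin d))
    (hS : ∀ n ω, S n ω = ∑ i ∈ Finset.Icc 1 n, ξ i ω)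
    (G : ℕ → Ω → EuclideanSpace ℝ (Fin d))
    (hG0 : ∀ ω, G 0 ω = 0)
    (hG : ∀ n : ℕ, 1 ≤ n → ∀ ω, G n ω = (n : ℝ)⁻¹ • ∑ i ∈ Finset.Icc 1 n, S i ω)
    (Δ : ℕ → Ω → ℝ → EuclideanSpace ℝ (Fin d))
    (hΔ : ∀ (n : ℕ) (ω : Ω) (t : ℝ),
      Δ n ω t = t⁻¹ • (∫ s in (0:ℝ)..t, S ⌊(n : ℝ) * s⌋₊ ω) - G ⌊(n : ℝ) * t⌋₊ ω)
    (α : ℝ) (hα : 0 < α) :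
    ∀ᵐ ω ∂ℙ, Tendsto
      (fun n : ℕ => (n : ℝ) ^ (-α) * ⨆ t ∈ Icc (0:ℝ) 1, ‖Δ n ω t‖)
      atTop (nhds 0) := by
  filter_upwards [ae_exists_norm_sum_range_le_mul (X := fun i => ξ (i + 1)) hint
    (fun i j hij => hindep.indepFun hij) hident] with ω ⟨C, hC⟩
  have hSC (k : ℕ) : ‖S k ω‖ ≤ C * k := by
    have hshift : ∑ i ∈ Finset.range k, ξ (i + 1) ω = S k ω := by
      rw [hS, Finset.range_eq_Ico, Finset.sum_Ico_add' (ξ · ω), Finset.Ico_add_one_right_eq_Icc]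
    exact hshift ▸ hC k
  have hC0 : 0 ≤ C := by simpa using (norm_nonneg _).trans (hSC 1)
  have hGω (m : ℕ) : G m ω = centreOfMass (S · ω) m := by
    rcases m.eq_zero_or_pos with rfl | hm
    · simp [hG0, centreOfMass]
    · exact hG m hm ω
  have hΔC (n : ℕ) (hn : 1 ≤ n) (t : ℝ) (ht : t ∈ Icc (0 : ℝ) 1) : ‖Δ n ω t‖ ≤ C := by
    rw [hΔ, hGω]
    exact norm_inv_smul_integral_comp_natFloor_mul_sub_centreOfMass_le (S · ω)
      (by simp [hS]) hSC (by omega) ht.1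
  exact tendsto_natCast_rpow_neg_mul_of_le hα
    (fun n => Real.iSup_nonneg fun t => Real.iSup_nonneg fun _ => norm_nonneg _)
    ((eventually_ge_atTop 1).mono fun n hn =>
      Real.iSup_le (fun t => Real.iSup_le (hΔC n hn t) hC0) hC0)

/-- **The centre of mass is uniformly well-approximated by the integrated trajectory.**
With `Δ_n(t) = t⁻¹ ∫₀ᵗ S_{⌊ns⌋} ds − G_{⌊nt⌋}` for `t ∈ (0,1]` and `Δ_n(0) = 0`
(note `(0 : ℝ)⁻¹ = 0` in Lean, so the formula below also gives `Δ_n(0) = 0`),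
for every `α > 0`, almost surely `n^{-α} sup_{t ∈ [0,1]} ‖Δ_n(t)‖ → 0`. -/
theorem centre_of_mass_approx {d : ℕ} (hd : 1 ≤ d)
    {Ω : Type*} [MeasureSpace Ω] [IsProbabilityMeasure (ℙ : Measure Ω)]
    (ξ : ℕ → Ω → EuclideanSpace ℝ (Fin d))
    (hmeas : ∀ i, Measurable (ξ i))
    (hindep : iIndepFun (fun i : ℕ => ξ (i + 1)) ℙ)
    (hident : ∀ i : ℕ, IdentDistrib (ξ (i + 1)) (ξ 1) ℙ ℙ)
    (hint : Integrable (ξ 1) ℙ)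
    (μv : EuclideanSpace ℝ (Fin d)) (hμ : ∫ ω, ξ 1 ω ∂ℙ = μv)
    (S : ℕ → Ω → EuclideanSpace ℝ (Fin d))
    (hS : ∀ n ω, S n ω = ∑ i ∈ Finset.Icc 1 n, ξ i ω)
    (G : ℕ → Ω → EuclideanSpace ℝ (Fin d))
    (hG0 : ∀ ω, G 0 ω = 0)
    (hG : ∀ n : ℕ, 1 ≤ n → ∀ ω, G n ω = (n : ℝ)⁻¹ • ∑ i ∈ Finset.Icc 1 n, S i ω)
    (Δ : ℕ → Ω → ℝ → EuclideanSpace ℝ (Fin d))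
    (hΔ : ∀ (n : ℕ) (ω : Ω) (t : ℝ),
      Δ n ω t = t⁻¹ • (∫ s in (0:ℝ)..t, S ⌊(n : ℝ) * s⌋₊ ω) - G ⌊(n : ℝ) * t⌋₊ ω)
    (α : ℝ) (hα : 0 < α) :
    ∀ᵐ ω ∂ℙ, Tendsto
      (fun n : ℕ => (n : ℝ) ^ (-α) * ⨆ t ∈ Icc (0:ℝ) 1, ‖Δ n ω t‖)
      atTop (nhds 0) :=
  centre_of_mass_approx_general ξ hindep hident hint S hS G hG0 hG Δ hΔ α hα
end
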